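/- For every j ≥ 1 and s ∈ ℝ, the integral I_j(s) := ∫_ℝ sin(st) · t · φ_j(t)² dt, where φ_j is the L²-normalized j-th Hermite function for the harmonic oscillator -d²/dt² + t², equals P_j(s) e^{-s²/4} with P_j(s) = (s/2)(L_{j-1}(s²/2) - 2 L'_{j-1}(s²/2)). -/

import Mathlib

open MeasureTheory Real

/-- Hermite polynomials `H_q(t) = e^{t²/2} (d/dt - t)^q e^{-t²/2}` (3.11). -/
noncomputable def hermQ (q : ℕ) : ℝ → ℝ :=
  fun t => Real.exp (t ^ 2 / 2) *
    ((fun f : ℝ → ℝ => fun s => deriv f s - s * f s)^[q] (fun s => Real.exp (-(s ^ 2) / 2))) t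

/-- Laguerre polynomials `L_q(ξ) = (1/q!) e^ξ (d/dξ)^q (ξ^q e^{-ξ})`. -/
noncomputable def laguQ (q : ℕ) : ℝ → ℝ :=
  fun ξ => (q.factorial : ℝ)⁻¹ * Real.exp ξ *
    iteratedDeriv q (fun x : ℝ => x ^ q * Real.exp (-x)) ξ

/-- Normalized eigenfunctions of the harmonic oscillator `-d²/dt² + B²t²` (3.10). -/
noncomputable def oscFun (j : ℕ) (B t : ℝ) : ℝ :=
  B ^ ((1 : ℝ) / 4) / Real.sqrt ((j - 1).factorial * 2 ^ (j - 1) * Real.sqrt π) *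
    hermQ (j - 1) (Real.sqrt B * t) * Real.exp (-(B * t ^ 2) / 2)

/-- `I_j(s; B) = ∫ sin(st) t φ_j(t;B)² dt`. -/
noncomputable def oscI (j : ℕ) (B s : ℝ) : ℝ :=
  ∫ t : ℝ, Real.sin (s * t) * t * (oscFun j B t) ^ 2

/-- The odd polynomial function `𝒫_j(s) = (s/2)(L_{j-1}(s²/2) - 2 L'_{j-1}(s²/2))`. -/
noncomputable def oscP (j : ℕ) (s : ℝ) : ℝ :=
  s / 2 * (laguQ (j - 1) (s ^ 2 / 2) - 2 * deriv (laguQ (j - 1)) (s ^ 2 / 2))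

/-- Fourier coefficients `α_l = ∫₀¹ a(t) e^{-2πilt} dt`. -/
noncomputable def fourCoef (a : ℝ → ℝ) (l : ℕ) : ℂ :=
  ∫ t in (0 : ℝ)..1, (a t : ℂ) * Complex.exp (-(2 * π * l * t) * Complex.I)

/-- `F_j(k; B) = ∫ a(t + k/B) t φ_j(t;B)² dt` (3.17). -/
noncomputable def oscF (a : ℝ → ℝ) (j : ℕ) (B k : ℝ) : ℝ :=
  ∫ t : ℝ, a (t + k / B) * t * (oscFun j B t) ^ 2


open Polynomial

/-!
With `q = j - 1` we have `φ_j(t)² = (q! 2^q √π)⁻¹ H_q(t)² e^{-t²}`. Put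
`Λ_s(p) = ∫ p(t) e^{-t²} e^{ist} dt` (`gaussFourier s p`) for complex polynomials `p`.
With `h_q = (-1)^q H_q`, the function `h_q e^{-t²}` is the `q`-th derivative of `e^{-t²}`,
so integrating by parts `q` times gives `Λ_s(p h_q) = (-1)^q Λ_s((D + is)^q p)`, where
`D = d/dt`. Taking `p = h_q`, expanding `(D + is)^q` binomially and using
`h_q^{(m)} ∝ h_{q-m}` and `Λ_s(h_n) = (-is)^n √π e^{-s²/4}`, we get the binomial expansion of
`(D - 1)^q X^q` from the Rodrigues formula for `L_q`:
`Λ_s(H_q²) = 2^q q! √π e^{-s²/4} L_q(s²/2)`. Differentiating in `s` under the integral sign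
turns the left side into `i Λ_s(t H_q²)`, whose imaginary part is the sine integral. So
`I_j(s)` is `-d/ds` of `e^{-s²/4} L_q(s²/2)`, which is `𝒫_j(s) e^{-s²/4}`.
-/

section Hermite

variable (R : Type*) [CommRing R]

/-- `hermPoly R q = (-1)^q H_q` for the physicists' Hermite polynomial `H_q`, matching `hermQ`. -/
noncomputable def hermPoly : ℕ → R[X]
  | 0 => 1
  | q + 1 => derivative (hermPoly q) - 2 * X * hermPoly q

variable {R}

theorem hermPoly_succ (q : ℕ) :
    hermPoly R (q + 1) = derivative (hermPoly R q) - 2 * X * hermPoly R q := rfl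

theorem map_hermPoly {S : Type*} [CommRing S] (f : R →+* S) (q : ℕ) :
    (hermPoly R q).map f = hermPoly S q := by
  induction q with
  | zero => simp [hermPoly]
  | succ q ih => simp [hermPoly_succ, ← derivative_map, ih]

theorem derivative_hermPoly_succ (q : ℕ) :
    derivative (hermPoly R (q + 1)) = (-(2 * (q + 1)) : R) • hermPoly R q := by
  induction q with
  | zero => simp [hermPoly, smul_eq_C_mul, map_ofNat]
  | succ q ih =>
    rw [hermPoly_succ (q + 1), derivative_sub, ih, derivative_smul, derivative_mul, ih,
      hermPoly_succ q]
    simp only [derivative_mul, derivative_ofNat, derivative_X, smul_eq_C_mul, map_neg, map_mul,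
      map_add, map_natCast, map_ofNat, map_one]
    push_cast
    ring

theorem iterate_derivative_hermPoly (m k : ℕ) :
    derivative^[m] (hermPoly R (k + m))
      = ((-2) ^ m * (k + m).descFactorial m : R) • hermPoly R k := by
  induction m with
  | zero => simp
  | succ m ih =>
    rw [Function.iterate_succ_apply, ← add_assoc, derivative_hermPoly_succ,
      iterate_derivative_smul, ih, smul_smul, Nat.succ_descFactorial_succ]
    congr 1
    push_cast
    ring

theorem hasDerivAt_eval_mul_exp_neg_sq_div_two (p : ℝ[X]) (t : ℝ) :
    HasDerivAt (fun t => p.eval t * rexp (-t ^ 2 / 2))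
      (((derivative p).eval t - t * p.eval t) * rexp (-t ^ 2 / 2)) t := by
  have hexp : HasDerivAt (fun t : ℝ => rexp (-t ^ 2 / 2)) (rexp (-t ^ 2 / 2) * -t) t := by
    have : HasDerivAt (fun t : ℝ => -t ^ 2 / 2) (-t) t :=
      ((hasDerivAt_pow 2 t).fun_neg.div_const 2).congr_deriv (by push_cast; ring)
    exact this.exp
  exact ((p.hasDerivAt t).fun_mul hexp).congr_deriv (by ring)

theorem hermQ_eq_eval (q : ℕ) (t : ℝ) : hermQ q t = (hermPoly ℝ q).eval t := by
  suffices h : ((fun f : ℝ → ℝ => fun s => deriv f s - s * f s)^[q]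
      (fun s => rexp (-(s ^ 2) / 2))) = fun t => (hermPoly ℝ q).eval t * rexp (-t ^ 2 / 2) by
    rw [hermQ, h, mul_left_comm, ← Real.exp_add, neg_div, add_neg_cancel, Real.exp_zero, mul_one]
  induction q with
  | zero => simp [hermPoly]
  | succ q ih =>
    rw [Function.iterate_succ_apply', ih]
    funext t
    rw [(hasDerivAt_eval_mul_exp_neg_sq_div_two _ t).deriv, hermPoly_succ]
    simp only [eval_sub, eval_mul, eval_X, eval_ofNat]
    ring

end Hermite

open Finset in
theorem Module.End.add_algebraMap_pow_apply {R M : Type*} [CommSemiring R] [AddCommMonoid M]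
    [Module R M] (f : Module.End R M) (c : R) (n : ℕ) (x : M) :
    ((f + algebraMap R (Module.End R M) c) ^ n) x
      = ∑ m ∈ range (n + 1), (n.choose m * c ^ (n - m)) • f^[m] x := by
  rw [(Algebra.commute_algebraMap_right c f).add_pow, LinearMap.sum_apply]
  refine sum_congr rfl fun m _ => ?_
  simp [← map_pow, Module.End.pow_apply, mul_smul, Nat.cast_smul_eq_nsmul]

section Laguerre

noncomputable def laguerre (q : ℕ) : ℝ[X] :=
  (q.factorial : ℝ)⁻¹ • (((derivative - 1 : Module.End ℝ ℝ[X])) ^ q) (X ^ q)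

theorem hasDerivAt_eval_mul_exp_neg (p : ℝ[X]) (x : ℝ) :
    HasDerivAt (fun x => p.eval x * rexp (-x))
      ((derivative p - p).eval x * rexp (-x)) x :=
  ((p.hasDerivAt x).fun_mul (hasDerivAt_neg x).exp).congr_deriv <| by
    simp only [mul_neg, mul_one, eval_sub]
    ring

theorem iteratedDeriv_eval_mul_exp_neg (m : ℕ) (p : ℝ[X]) :
    iteratedDeriv m (fun x => p.eval x * rexp (-x))
      = fun x => (((derivative - 1 : Module.End ℝ ℝ[X]) ^ m) p).eval x * rexp (-x) := by
  induction m generalizing p with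
  | zero => simp
  | succ m ih =>
    rw [iteratedDeriv_succ', funext fun x => (hasDerivAt_eval_mul_exp_neg p x).deriv, ih, pow_succ]
    simp

theorem laguQ_eq_eval (q : ℕ) : laguQ q = fun x => (laguerre q).eval x := by
  funext x
  have h := congrFun (iteratedDeriv_eval_mul_exp_neg q (X ^ q)) x
  simp only [eval_pow, eval_X] at h
  rw [laguQ, h, laguerre, eval_smul, smul_eq_mul, Real.exp_neg]
  field_simp

theorem eval_laguerre (q : ℕ) (x : ℝ) :
    (laguerre q).eval x = (q.factorial : ℝ)⁻¹ *
      ∑ m ∈ Finset.range (q + 1),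
        q.choose m * (-1) ^ (q - m) * q.descFactorial m * x ^ (q - m) := by
  rw [laguerre, sub_eq_add_neg, ← map_one (algebraMap ℝ _), ← map_neg,
    Module.End.add_algebraMap_pow_apply, eval_smul, eval_finsetSum, smul_eq_mul]
  congr 1
  refine Finset.sum_congr rfl fun m _ => ?_
  rw [iterate_derivative_X_pow_eq_smul, eval_smul, eval_smul]
  simp only [eval_pow, eval_X, smul_eq_mul]
  ring

end Laguerre

section GaussFourier

open Complex

noncomputable def gaussKernel (s : ℝ) (p : ℂ[X]) (t : ℝ) : ℂ :=
  p.eval (t : ℂ) * cexp (-(t : ℂ) ^ 2 + I * s * t)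

theorem norm_gaussKernel (s : ℝ) (p : ℂ[X]) (t : ℝ) :
    ‖gaussKernel s p t‖ = ‖p.eval (t : ℂ)‖ * rexp (-t ^ 2) := by
  rw [gaussKernel, norm_mul, Complex.norm_exp]
  congr 2
  simp [← ofReal_pow]

theorem integrable_pow_mul_exp_neg_sq (n : ℕ) :
    Integrable fun t : ℝ => t ^ n * rexp (-t ^ 2) := by
  have hn : (-1 : ℝ) < n := by linarith [n.cast_nonneg (α := ℝ)]
  simpa [Real.rpow_natCast] using integrable_rpow_mul_exp_neg_mul_sq (b := 1) one_pos hn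

theorem continuous_gaussKernel (s : ℝ) (p : ℂ[X]) : Continuous (gaussKernel s p) := by
  unfold gaussKernel
  fun_prop

theorem integrable_gaussKernel (s : ℝ) (p : ℂ[X]) : Integrable (gaussKernel s p) := by
  induction p using Polynomial.induction_on' with
  | add p q hp hq =>
    have h : gaussKernel s (p + q) = gaussKernel s p + gaussKernel s q := by
      funext t
      simp [gaussKernel, add_mul]
    exact h ▸ hp.add hq
  | monomial n a =>
    refine (integrable_norm_iff (continuous_gaussKernel s _).aestronglyMeasurable).1 ?_
    simp_rw [norm_gaussKernel, eval_monomial, norm_mul, norm_pow, Complex.norm_real, mul_assoc]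
    refine ((integrable_pow_mul_exp_neg_sq n).norm.const_mul ‖a‖).congr <|
      ae_of_all _ fun t => ?_
    simp [Real.abs_exp]

noncomputable def gaussFourier (s : ℝ) : ℂ[X] →ₗ[ℂ] ℂ where
  toFun p := ∫ t, gaussKernel s p t
  map_add' p q := by
    simp only [gaussKernel, eval_add, add_mul]
    exact integral_add (integrable_gaussKernel s p) (integrable_gaussKernel s q)
  map_smul' c p := by
    simp [gaussKernel, mul_assoc, integral_const_mul]

theorem gaussFourier_apply (s : ℝ) (p : ℂ[X]) :
    gaussFourier s p = ∫ t, gaussKernel s p t := rfl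

theorem gaussFourier_one (s : ℝ) :
    gaussFourier s 1 = ((√π * rexp (-s ^ 2 / 4) : ℝ) : ℂ) := by
  have h := integral_cexp_quadratic (b := -1) (by simp) (I * s) 0
  simp only [gaussFourier_apply, gaussKernel, eval_one, one_mul]
  convert h using 1
  · congr 1; funext t; ring_nf
  · rw [neg_neg, div_one, Real.sqrt_eq_rpow, ofReal_mul, ofReal_cpow Real.pi_pos.le, ofReal_exp]
    push_cast
    congr 2
    ring_nf
    rw [I_sq]
    ring

theorem hasDerivAt_gaussKernel (s : ℝ) (p : ℂ[X]) (t : ℝ) :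
    HasDerivAt (gaussKernel s p)
      (gaussKernel s (derivative p + (I * s) • p - 2 * X * p) t) t := by
  have hexp : HasDerivAt (fun t : ℝ => cexp (-(t : ℂ) ^ 2 + I * s * t))
      (cexp (-(t : ℂ) ^ 2 + I * s * t) * (-2 * t + I * s)) t := by
    have hid := (hasDerivAt_id t).ofReal_comp
    refine (((hid.pow 2).neg.add (hid.const_mul (I * s))).cexp).congr_deriv ?_
    simp
  exact ((p.hasDerivAt (t : ℂ)).comp_ofReal.mul hexp).congr_deriv <| by
    simp only [gaussKernel, eval_sub, eval_add, eval_smul, smul_eq_mul, eval_mul, eval_ofNat,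
      eval_X]
    ring

theorem gaussFourier_two_X_mul (s : ℝ) (p : ℂ[X]) :
    gaussFourier s (2 * X * p) = gaussFourier s (derivative p + (I * s) • p) := by
  have h := integral_eq_zero_of_hasDerivAt_of_integrable (hasDerivAt_gaussKernel s p)
    (integrable_gaussKernel s _) (integrable_gaussKernel s p)
  rw [← gaussFourier_apply, map_sub] at h
  exact (sub_eq_zero.1 h).symm

/-- `d/dt` conjugated by `e^{ist}`: `p ↦ p' + isp`. -/
noncomputable def twistedDerivative (s : ℝ) : Module.End ℂ ℂ[X] :=
  derivative + algebraMap ℂ (Module.End ℂ ℂ[X]) (I * s)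

theorem gaussFourier_mul_hermPoly (s : ℝ) (b : ℕ) (p : ℂ[X]) :
    gaussFourier s (p * hermPoly ℂ b) = (-1) ^ b *
      gaussFourier s ((twistedDerivative s ^ b) p) := by
  induction b generalizing p with
  | zero => simp [hermPoly]
  | succ b ih =>
    have hparts := gaussFourier_two_X_mul s (p * hermPoly ℂ b)
    rw [pow_succ (twistedDerivative s), Module.End.mul_apply, pow_succ, mul_right_comm, ← ih]
    simp only [hermPoly_succ, derivative_mul, mul_sub, map_sub, map_add, map_smul, add_mul,
      smul_mul_assoc, twistedDerivative, LinearMap.add_apply, Module.algebraMap_end_apply]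
      at hparts ⊢
    rw [show p * (2 * X * hermPoly ℂ b) = 2 * X * (p * hermPoly ℂ b) by ring, hparts]
    ring

theorem gaussFourier_hermPoly (s : ℝ) (n : ℕ) :
    gaussFourier s (hermPoly ℂ n) = (-(I * s)) ^ n * gaussFourier s 1 := by
  have h := gaussFourier_mul_hermPoly s n 1
  rw [one_mul] at h
  rw [h, twistedDerivative, Module.End.add_algebraMap_pow_apply, Finset.sum_range_succ',
    Finset.sum_eq_zero]
  · simp only [zero_add, Nat.choose_zero_right, Nat.cast_one, one_mul, Nat.sub_zero,
      Function.iterate_zero, id, map_smul, smul_eq_mul, neg_pow (I * s)]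
    ring
  · intro m _
    simp [iterate_derivative_one]

theorem gaussFourier_hermPoly_mul_self (s : ℝ) (q : ℕ) :
    gaussFourier s (hermPoly ℂ q * hermPoly ℂ q) =
      ((2 ^ q * q.factorial * √π * (rexp (-s ^ 2 / 4) * (laguerre q).eval (s ^ 2 / 2)) : ℝ) :
        ℂ) := by
  have hcancel : ∀ a b : ℝ, 2 ^ q * q.factorial * √π * (a * ((q.factorial : ℝ)⁻¹ * b))
      = 2 ^ q * b * (√π * a) := fun a b => by field_simp
  rw [gaussFourier_mul_hermPoly, twistedDerivative, Module.End.add_algebraMap_pow_apply, map_sum,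
    Finset.mul_sum, eval_laguerre, hcancel, Finset.mul_sum, Finset.sum_mul, ofReal_sum]
  refine Finset.sum_congr rfl fun m hm => ?_
  obtain ⟨k, rfl⟩ : ∃ k, q = k + m := ⟨q - m, by grind⟩
  have hsign : (-1 : ℂ) ^ (k + m) * (-2) ^ m = (-1) ^ k * 2 ^ m := by
    have h : ((-1 : ℂ) ^ m) ^ 2 = 1 := by rw [← pow_mul, mul_comm, pow_mul]; norm_num
    rw [neg_pow (2 : ℂ) m, pow_add]
    linear_combination ((-1 : ℂ) ^ k * 2 ^ m) * h
  have hsq : (I * s) ^ k * (-(I * s)) ^ k = ((s : ℂ) ^ 2) ^ k := by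
    rw [← mul_pow]; congr 1; ring_nf; rw [I_sq]; ring
  rw [Nat.add_sub_cancel, iterate_derivative_hermPoly, map_smul, map_smul, gaussFourier_hermPoly,
    gaussFourier_one, smul_eq_mul, smul_eq_mul]
  push_cast
  calc _ = ((-1) ^ (k + m) * (-2) ^ m) * ((I * s) ^ k * (-(I * s)) ^ k)
        * ((k + m).choose m * (k + m).descFactorial m * (√π * cexp (-s ^ 2 / 4))) := by ring
    _ = _ := by
      rw [hsign, hsq, div_pow, pow_add]
      field_simp

theorem hasDerivAt_gaussFourier (p : ℂ[X]) (s : ℝ) :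
    HasDerivAt (fun σ => gaussFourier σ p) (I * gaussFourier s (X * p)) s := by
  have hnorm (σ t : ℝ) : ‖I * gaussKernel σ (X * p) t‖ = ‖gaussKernel 0 (X * p) t‖ := by
    rw [norm_mul, norm_I, one_mul, norm_gaussKernel, norm_gaussKernel]
  have hderiv (σ t : ℝ) :
      HasDerivAt (fun σ => gaussKernel σ p t) (I * gaussKernel σ (X * p) t) σ := by
    have hlin : HasDerivAt (fun σ : ℝ => -(t : ℂ) ^ 2 + I * σ * t) (I * t) σ := by
      simpa using (((hasDerivAt_id σ).ofReal_comp.const_mul I).mul_const (t : ℂ)).const_add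
        (-(t : ℂ) ^ 2)
    refine (hlin.cexp.const_mul (p.eval (t : ℂ))).congr_deriv ?_
    simp only [gaussKernel, eval_mul, eval_X]
    ring
  simp only [gaussFourier_apply, ← integral_const_mul]
  exact (hasDerivAt_integral_of_dominated_loc_of_deriv_le Filter.univ_mem
    (.of_forall fun σ => (integrable_gaussKernel σ p).aestronglyMeasurable)
    (integrable_gaussKernel s p) ((integrable_gaussKernel s _).const_mul I).aestronglyMeasurable
    (ae_of_all _ fun t σ _ => (hnorm σ t).le) (integrable_gaussKernel 0 _).norm
    (ae_of_all _ fun t σ _ => hderiv σ t)).2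

theorem im_gaussFourier_X_mul_map (s : ℝ) (p : ℝ[X]) :
    (gaussFourier s (X * p.map ofRealHom)).im
      = ∫ t, Real.sin (s * t) * t * (p.eval t * rexp (-t ^ 2)) := by
  have h := integral_im (integrable_gaussKernel s (X * p.map ofRealHom))
  rw [gaussFourier_apply, ← RCLike.im_to_complex, ← h]
  congr 1
  funext t
  have he : (p.map ofRealHom).eval (t : ℂ) = p.eval t := by
    rw [eval_map, ← ofRealHom_eq_coe, eval₂_at_apply, ofRealHom_eq_coe]
  have hre : (-(t : ℂ) ^ 2 + I * s * t).re = -t ^ 2 := by simp [← ofReal_pow]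
  have him : (-(t : ℂ) ^ 2 + I * s * t).im = s * t := by simp [← ofReal_pow]
  rw [gaussKernel, eval_mul, eval_X, he, ← ofReal_mul, RCLike.im_to_complex, im_ofReal_mul,
    exp_im, hre, him]
  ring

end GaussFourier

theorem integral_sin_mul_mul_eval_hermPoly_sq (q : ℕ) (s : ℝ) :
    ∫ t, Real.sin (s * t) * t * ((hermPoly ℝ q).eval t ^ 2 * rexp (-t ^ 2))
      = 2 ^ q * q.factorial * √π *
        (s / 2 * (laguQ q (s ^ 2 / 2) - 2 * deriv (laguQ q) (s ^ 2 / 2)) * rexp (-s ^ 2 / 4)) := by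
  simp only [laguQ_eq_eval, Polynomial.deriv, ← eval_pow]
  have hg : HasDerivAt (fun σ =>
        2 ^ q * q.factorial * √π * (rexp (-σ ^ 2 / 4) * (laguerre q).eval (σ ^ 2 / 2)))
      (-(2 ^ q * q.factorial * √π * (s / 2 * ((laguerre q).eval (s ^ 2 / 2)
        - 2 * (derivative (laguerre q)).eval (s ^ 2 / 2)) * rexp (-s ^ 2 / 4)))) s := by
    have hsq : HasDerivAt (fun σ : ℝ => σ ^ 2) (2 * s) s := by simpa using hasDerivAt_pow 2 s
    have hexp := (hsq.fun_neg.div_const 4).exp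
    have hL := ((laguerre q).hasDerivAt (s ^ 2 / 2)).comp s (hsq.div_const 2)
    refine ((hexp.fun_mul hL).const_mul _).congr_deriv ?_
    dsimp only [Function.comp_apply]
    ring
  have key := (hasDerivAt_gaussFourier (hermPoly ℂ q * hermPoly ℂ q) s).unique <| by
    simpa only [gaussFourier_hermPoly_mul_self] using hg.ofReal_comp
  have him := congrArg Complex.re key
  simp only [Complex.mul_re, Complex.I_re, Complex.I_im, Complex.ofReal_re] at him
  rw [← im_gaussFourier_X_mul_map, Polynomial.map_pow, map_hermPoly, sq]
  linarith

theorem oscFun_one_sq (j : ℕ) (t : ℝ) :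
    oscFun j 1 t ^ 2 = ((j - 1).factorial * 2 ^ (j - 1) * √π)⁻¹
      * ((hermPoly ℝ (j - 1)).eval t ^ 2 * rexp (-t ^ 2)) := by
  rw [oscFun, hermQ_eq_eval, Real.one_rpow, Real.sqrt_one, one_mul, one_mul, mul_pow, mul_pow,
    div_pow, Real.sq_sqrt (by positivity), ← Real.exp_nat_mul]
  push_cast
  ring_nf

theorem oscI_eq_oscP_mul_exp_general (j : ℕ) (s : ℝ) :
    (∫ t : ℝ, Real.sin (s * t) * t * (oscFun j 1 t) ^ 2) =
      (s / 2 * (laguQ (j - 1) (s ^ 2 / 2) - 2 * deriv (laguQ (j - 1)) (s ^ 2 / 2))) *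
        Real.exp (-s ^ 2 / 4) := by
  simp_rw [oscFun_one_sq, mul_left_comm _ ((_ : ℝ)⁻¹), integral_const_mul,
    integral_sin_mul_mul_eval_hermPoly_sq]
  field_simp

/-- `I_j(s) = ∫ sin(st) t φ_j(t)² dt = 𝒫_j(s) e^{-s²/4}` for the normalized
Hermite functions of `-d²/dt² + t²` (i.e. `B = 1`), cf. (3.22). -/
theorem oscI_eq_oscP_mul_exp (j : ℕ) (hj : 1 ≤ j) (s : ℝ) :
    (∫ t : ℝ, Real.sin (s * t) * t * (oscFun j 1 t) ^ 2) =
      (s / 2 * (laguQ (j - 1) (s ^ 2 / 2) - 2 * deriv (laguQ (j - 1)) (s ^ 2 / 2))) *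
        Real.exp (-s ^ 2 / 4) :=
  oscI_eq_oscP_mul_exp_general j s
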